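/- Let G = (V, E) be a finite simple graph. Let AO_G^inter be the graph whose vertices are the acyclic orientations of G, where two acyclic orientations O_1 ≠ O_2 are adjacent if and only if there exists an edge {u,v} ∈ E, oriented (u,v) by O_1, such that the interval reversal (O_1)_{{u,v}} equals O_2. Then AO_G^inter is a well-defined simple graph (adjacency is symmetric), it is |E|-regular (every acyclic orientation has exactly |E| neighbors), and it is connected. -/

import Mathlib

/-!
For an acyclic orientation `O` with an arc `(u, v)`, the reversed arcs are exactly the arcs with
both ends in the interval `I = [u, v]` of `≤_O`. Reversing them keeps `O` acyclic and makes `I`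
the interval `[v, u]` of the new orientation, so reversing again along `(v, u)` restores `O`: the
adjacency is symmetric. The reversal along `(u, v)` flips `(u, v)` itself, so it determines the
endpoints of `I` and hence `(u, v)`; the neighbours of `O` therefore correspond to its arcs, i.e.
to the edges of `G`. For connectivity fix a linear order on `V`: a descent (an arc pointing down)
whose interval is smallest has no further vertex in it, so reversing along it flips that arc alone
and removes one descent. Every acyclic orientation thus reaches the unique one without descents.
-/

/-- `O` is an orientation of `G`. -/
def IsOrientation {V : Type*} (G : SimpleGraph V) (O : V → V → Prop) : Prop :=
  (∀ u v, O u v → G.Adj u v) ∧ ∀ u v, G.Adj u v → (O u v ↔ ¬ O v u)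

/-- The relation `O` has no directed cycles. -/
def IsAcyclicRel {V : Type*} (O : V → V → Prop) : Prop :=
  ∀ v, ¬ Relation.TransGen O v v

/-- The condition under which a directed edge `(x,y)` of `O` gets reversed in the interval
reversal indexed by `(u,v)`: `u ≤_O x`, `x <_O y` and `y ≤_O v`. -/
def irCond {V : Type*} (O : V → V → Prop) (u v x y : V) : Prop :=
  Relation.ReflTransGen O u x ∧ (Relation.ReflTransGen O x y ∧ x ≠ y) ∧
    Relation.ReflTransGen O y v

/-- The interval reversal `O_{{u,v}}` of an orientation `O`. -/
def intervalReversal {V : Type*} (O : V → V → Prop) (u v : V) : V → V → Prop :=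
  fun a b => (O a b ∧ ¬ irCond O u v a b) ∨ (O b a ∧ irCond O u v b a)

/-- The vertices of the interval-reversal graph: acyclic orientations of `G`. -/
def AOVert {V : Type*} (G : SimpleGraph V) :=
  {O : V → V → Prop // IsOrientation G O ∧ IsAcyclicRel O}

/-- Adjacency in `AO_G^inter`: two distinct acyclic orientations related by an interval
reversal along some edge. -/
def AOAdj {V : Type*} (G : SimpleGraph V) (O₁ O₂ : AOVert G) : Prop :=
  O₁ ≠ O₂ ∧ ∃ u v : V, O₁.1 u v ∧ intervalReversal O₁.1 u v = O₂.1

open Relation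

namespace Relation

variable {α : Type*} {R : α → α → Prop} {a b : α}

theorem TransGen.restrict_reach (h : TransGen R a b) (hb : ReflTransGen R b a) :
    TransGen (fun x y => R x y ∧ ReflTransGen R a x ∧ ReflTransGen R y a) a b := by
  induction h with
  | single hab => exact .single ⟨hab, .refl, hb⟩
  | @tail c b hac hcb ih =>
    exact .tail (ih (hb.head hcb)) ⟨hcb, hac.to_reflTransGen, hb⟩

end Relation

section Acyclic

variable {V : Type*} {O : V → V → Prop} {x y : V}

theorem IsAcyclicRel.ne (hA : IsAcyclicRel O) (h : O x y) : x ≠ y := by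
  rintro rfl
  exact hA x (.single h)

theorem IsAcyclicRel.asymm (hA : IsAcyclicRel O) (h : O x y) : ¬ O y x :=
  fun h' => hA x (.tail (.single h) h')

theorem IsAcyclicRel.antisymm (hA : IsAcyclicRel O) (hxy : ReflTransGen O x y)
    (hyx : ReflTransGen O y x) : x = y := by
  rcases reflTransGen_iff_eq_or_transGen.mp hxy with h | h
  · exact h.symm
  rcases reflTransGen_iff_eq_or_transGen.mp hyx with h' | h'
  · exact h'
  · exact absurd (h.trans h') (hA x)

end Acyclic

section ReverseOn

variable {V : Type*} {O : V → V → Prop}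

def reverseOn (O : V → V → Prop) (S : Set V) : V → V → Prop :=
  fun a b => (O a b ∧ ¬ (a ∈ S ∧ b ∈ S)) ∨ (O b a ∧ a ∈ S ∧ b ∈ S)

theorem reverseOn_reverseOn (O : V → V → Prop) (S : Set V) : reverseOn (reverseOn O S) S = O := by
  funext a b
  simp only [reverseOn, eq_iff_iff]
  tauto

theorem IsOrientation.reverseOn {G : SimpleGraph V} (hO : IsOrientation G O) (S : Set V) :
    IsOrientation G (reverseOn O S) := by
  refine ⟨fun a b h => ?_, fun a b hab => ?_⟩
  · rcases h with ⟨h, -⟩ | ⟨h, -⟩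
    exacts [hO.1 a b h, (hO.1 b a h).symm]
  · have := hO.2 a b hab
    simp only [_root_.reverseOn]
    tauto

theorem reverseOn_iff_of_rel (hA : IsAcyclicRel O) {S : Set V} {x y : V} (h : O x y) :
    reverseOn O S x y ↔ ¬ (x ∈ S ∧ y ∈ S) := by
  have := hA.asymm h
  simp only [reverseOn]
  tauto

end ReverseOn

section PathInterval

variable {V : Type*} {O : V → V → Prop} {u v x y : V}

def pathInterval (O : V → V → Prop) (u v : V) : Set V :=
  {x | ReflTransGen O u x ∧ ReflTransGen O x v}

theorem irCond_iff_mem_pathInterval (hA : IsAcyclicRel O) (h : O x y) :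
    irCond O u v x y ↔ x ∈ pathInterval O u v ∧ y ∈ pathInterval O u v := by
  constructor
  · rintro ⟨hux, ⟨hxy, -⟩, hyv⟩
    exact ⟨⟨hux, hxy.trans hyv⟩, ⟨hux.trans hxy, hyv⟩⟩
  · rintro ⟨⟨hux, -⟩, ⟨-, hyv⟩⟩
    exact ⟨hux, ⟨.single h, hA.ne h⟩, hyv⟩

theorem intervalReversal_eq_reverseOn (hA : IsAcyclicRel O) (u v : V) :
    intervalReversal O u v = reverseOn O (pathInterval O u v) := by
  funext a b
  apply propext
  unfold intervalReversal reverseOn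
  constructor
  · rintro (⟨h, hc⟩ | ⟨h, hc⟩)
    · exact .inl ⟨h, fun hm => hc ((irCond_iff_mem_pathInterval hA h).mpr hm)⟩
    · exact .inr ⟨h, ((irCond_iff_mem_pathInterval hA h).mp hc).symm⟩
  · rintro (⟨h, hm⟩ | ⟨h, hm⟩)
    · exact .inl ⟨h, fun hc => hm ((irCond_iff_mem_pathInterval hA h).mp hc)⟩
    · exact .inr ⟨h, (irCond_iff_mem_pathInterval hA h).mpr hm.symm⟩

theorem reflTransGen_from_of_reverseOn (h : ReflTransGen (reverseOn O (pathInterval O u v)) x y)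
    (hx : ReflTransGen O u x) : ReflTransGen O u y := by
  induction h with
  | refl => exact hx
  | tail _ hstep ih =>
    rcases hstep with ⟨hstep, -⟩ | ⟨-, -, hm⟩
    exacts [ih.tail hstep, hm.1]

theorem reflTransGen_to_of_reverseOn (h : ReflTransGen (reverseOn O (pathInterval O u v)) x y)
    (hy : ReflTransGen O y v) : ReflTransGen O x v := by
  induction h using ReflTransGen.head_induction_on with
  | refl => exact hy
  | head hstep _ ih =>
    rcases hstep with ⟨hstep, -⟩ | ⟨-, hm, -⟩
    exacts [ih.head hstep, hm.2]

theorem mem_pathInterval_of_reverseOn (hxy : ReflTransGen (reverseOn O (pathInterval O u v)) x y)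
    (hyx : ReflTransGen (reverseOn O (pathInterval O u v)) y x) (hx : x ∈ pathInterval O u v) :
    y ∈ pathInterval O u v :=
  ⟨reflTransGen_from_of_reverseOn hxy hx.1, reflTransGen_to_of_reverseOn hyx hx.2⟩

/-- Interval reversal keeps acyclicity: along a directed cycle of the reversed orientation either
every vertex lies in the interval or none does, so the cycle consists of reversed arcs only or of
kept arcs only, and either way yields a cycle of `O`. -/
theorem IsAcyclicRel.reverseOn_pathInterval (hA : IsAcyclicRel O) (u v : V) :
    IsAcyclicRel (reverseOn O (pathInterval O u v)) := by
  intro a ha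
  set I := pathInterval O u v
  have hcyc := ha.restrict_reach .refl
  by_cases haI : a ∈ I
  · refine hA a (transGen_swap.mp (TransGen.mono ?_ a a hcyc))
    rintro x y ⟨hxy, hax, hya⟩
    have hx : x ∈ I := mem_pathInterval_of_reverseOn hax (hya.head hxy) haI
    have hy : y ∈ I := mem_pathInterval_of_reverseOn (hax.tail hxy) hya haI
    rcases hxy with ⟨-, hn⟩ | ⟨hyx, -⟩
    exacts [absurd ⟨hx, hy⟩ hn, hyx]
  · refine hA a (TransGen.mono ?_ a a hcyc)
    rintro x y ⟨hxy, hax, hya⟩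
    rcases hxy with ⟨hxy, -⟩ | hrev
    · exact hxy
    · exact absurd (mem_pathInterval_of_reverseOn (hya.head (.inr hrev)) hax hrev.2.1) haI

theorem reflTransGen_reverseOn_of_mem (hxy : ReflTransGen O x y) (hx : x ∈ pathInterval O u v)
    (hy : y ∈ pathInterval O u v) : ReflTransGen (reverseOn O (pathInterval O u v)) y x := by
  induction hxy with
  | refl => exact .refl
  | @tail m y hxm hmy ih =>
    have hm : m ∈ pathInterval O u v := ⟨hx.1.trans hxm, hy.2.head hmy⟩
    exact (ih hm).head (.inr ⟨hmy, hy, hm⟩)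

theorem pathInterval_reverseOn (huv : ReflTransGen O u v) :
    pathInterval (reverseOn O (pathInterval O u v)) v u = pathInterval O u v := by
  have hu : u ∈ pathInterval O u v := ⟨.refl, huv⟩
  have hv : v ∈ pathInterval O u v := ⟨huv, .refl⟩
  ext x
  constructor
  · rintro ⟨hvx, hxu⟩
    exact ⟨reflTransGen_from_of_reverseOn hvx huv, reflTransGen_to_of_reverseOn hxu huv⟩
  · intro hx
    exact ⟨reflTransGen_reverseOn_of_mem hx.2 hx hv, reflTransGen_reverseOn_of_mem hx.1 hu hx⟩

theorem intervalReversal_intervalReversal (hA : IsAcyclicRel O) (huv : O u v) :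
    intervalReversal (intervalReversal O u v) v u = O := by
  rw [intervalReversal_eq_reverseOn hA, intervalReversal_eq_reverseOn (hA.reverseOn_pathInterval u v),
    pathInterval_reverseOn (.single huv), reverseOn_reverseOn]

end PathInterval

section Reversal

variable {V : Type*} {O : V → V → Prop} {u v x y : V}

theorem intervalReversal_iff_of_rel (hA : IsAcyclicRel O) (h : O x y) :
    intervalReversal O u v x y ↔ ¬ (x ∈ pathInterval O u v ∧ y ∈ pathInterval O u v) := by
  rw [intervalReversal_eq_reverseOn hA, reverseOn_iff_of_rel hA h]

theorem not_intervalReversal_self (hA : IsAcyclicRel O) (huv : O u v) :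
    ¬ intervalReversal O u v u v := by
  rw [intervalReversal_iff_of_rel hA huv, not_not]
  exact ⟨⟨.refl, .single huv⟩, ⟨.single huv, .refl⟩⟩

theorem intervalReversal_swap (hA : IsAcyclicRel O) (huv : O u v) : intervalReversal O u v v u :=
  .inr ⟨huv, .refl, ⟨.single huv, hA.ne huv⟩, .refl⟩

theorem eq_of_intervalReversal_eq (hA : IsAcyclicRel O) {a b c d : V} (hab : O a b) (hcd : O c d)
    (h : intervalReversal O a b = intervalReversal O c d) : a = c ∧ b = d := by
  have hcd' := not_intervalReversal_self hA hcd
  have hab' := not_intervalReversal_self hA hab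
  rw [← h, intervalReversal_iff_of_rel hA hcd, not_not] at hcd'
  rw [h, intervalReversal_iff_of_rel hA hab, not_not] at hab'
  exact ⟨hA.antisymm hcd'.1.1 hab'.1.1, hA.antisymm hab'.2.2 hcd'.2.2⟩

end Reversal

theorem IsOrientation.ncard_arcs {V : Type*} {G : SimpleGraph V} {O : V → V → Prop}
    (hO : IsOrientation G O) : {p : V × V | O p.1 p.2}.ncard = G.edgeSet.ncard := by
  have hinj : Set.InjOn (fun p : V × V => s(p.1, p.2)) {p | O p.1 p.2} := by
    rintro ⟨a, b⟩ hab ⟨c, d⟩ hcd heq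
    rcases Sym2.eq_iff.mp heq with ⟨rfl, rfl⟩ | ⟨rfl, rfl⟩
    · rfl
    · exact absurd hcd ((hO.2 a b (hO.1 a b hab)).mp hab)
  have himg : (fun p : V × V => s(p.1, p.2)) '' {p | O p.1 p.2} = G.edgeSet := by
    ext e
    induction e using Sym2.ind with
    | h a b =>
      simp only [Set.mem_image, Set.mem_ofPred_eq, SimpleGraph.mem_edgeSet]
      constructor
      · rintro ⟨⟨c, d⟩, hcd, heq⟩
        rcases Sym2.eq_iff.mp heq with ⟨rfl, rfl⟩ | ⟨rfl, rfl⟩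
        exacts [hO.1 c d hcd, (hO.1 c d hcd).symm]
      · intro hab
        by_cases h : O a b
        · exact ⟨(a, b), h, rfl⟩
        · exact ⟨(b, a), not_not.mp (mt (hO.2 a b hab).mpr h), Sym2.eq_swap⟩
  rw [← himg, hinj.ncard_image]

namespace AOVert

variable {V : Type*} {G : SimpleGraph V}

def reversal (O : AOVert G) (u v : V) : AOVert G :=
  ⟨intervalReversal O.1 u v, by
    rw [intervalReversal_eq_reverseOn O.2.2]
    exact ⟨O.2.1.reverseOn _, O.2.2.reverseOn_pathInterval u v⟩⟩

theorem aoAdj_iff {O O' : AOVert G} :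
    AOAdj G O O' ↔ ∃ p ∈ {p : V × V | O.1 p.1 p.2}, O.reversal p.1 p.2 = O' := by
  constructor
  · rintro ⟨-, u, v, huv, heq⟩
    exact ⟨(u, v), huv, Subtype.ext heq⟩
  · rintro ⟨⟨u, v⟩, huv, rfl⟩
    refine ⟨fun h => ?_, u, v, huv, rfl⟩
    have h' : intervalReversal O.1 u v = O.1 := (congrArg Subtype.val h).symm
    exact not_intervalReversal_self O.2.2 huv (by rw [h']; exact huv)

end AOVert

theorem AOAdj.symm {V : Type*} {G : SimpleGraph V} {O₁ O₂ : AOVert G} (h : AOAdj G O₁ O₂) :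
    AOAdj G O₂ O₁ := by
  obtain ⟨hne, u, v, huv, heq⟩ := h
  refine ⟨hne.symm, v, u, ?_, ?_⟩ <;> rw [← heq]
  exacts [intervalReversal_swap O₁.2.2 huv, intervalReversal_intervalReversal O₁.2.2 huv]

theorem ncard_setOf_aoAdj {V : Type*} {G : SimpleGraph V} (O : AOVert G) :
    {O' : AOVert G | AOAdj G O O'}.ncard = G.edgeSet.ncard := by
  have himg : {O' : AOVert G | AOAdj G O O'} =
      (fun p : V × V => O.reversal p.1 p.2) '' {p | O.1 p.1 p.2} := by
    ext O'
    exact AOVert.aoAdj_iff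
  have hinj : Set.InjOn (fun p : V × V => O.reversal p.1 p.2) {p | O.1 p.1 p.2} := by
    rintro ⟨a, b⟩ hab ⟨c, d⟩ hcd h
    obtain ⟨rfl, rfl⟩ := eq_of_intervalReversal_eq O.2.2 hab hcd (congrArg Subtype.val h)
    rfl
  rw [himg, hinj.ncard_image, O.2.1.ncard_arcs]

section Descents

variable {V : Type*} [LinearOrder V] {O : V → V → Prop}

def descents (O : V → V → Prop) : Set (V × V) :=
  {e | O e.1 e.2 ∧ e.2 < e.1}

theorem exists_descent_of_reflTransGen {s t : V} (h : ReflTransGen O s t) (hts : t < s) :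
    ∃ e ∈ descents O, ReflTransGen O s e.1 ∧ ReflTransGen O e.2 t := by
  induction h with
  | refl => exact absurd hts (lt_irrefl _)
  | @tail m b hsm hmb ih =>
    rcases lt_or_ge b m with hbm | hmb'
    · exact ⟨(m, b), ⟨hmb, hbm⟩, hsm, .refl⟩
    · obtain ⟨e, he, hse, hem⟩ := ih (lt_of_le_of_lt hmb' hts)
      exact ⟨e, he, hse, hem.tail hmb⟩

/-- A vertex `w` strictly inside the interval of a descent `(p, q)` is either below `p`, or above
`q`; the path from `p` to `w`, resp. from `w` to `q`, then contains a descent with a smaller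
interval. -/
theorem exists_descent_pathInterval_ssubset (hA : IsAcyclicRel O) {p q w : V} (hqp : q < p)
    (hw : w ∈ pathInterval O p q) (hwp : w ≠ p) (hwq : w ≠ q) :
    ∃ e ∈ descents O, pathInterval O e.1 e.2 ⊂ pathInterval O p q := by
  obtain ⟨hpw, hwq'⟩ := hw
  have hp : p ∈ pathInterval O p q := ⟨.refl, hpw.trans hwq'⟩
  have hq : q ∈ pathInterval O p q := ⟨hpw.trans hwq', .refl⟩
  rcases lt_or_ge w p with hwp' | hpw'
  · obtain ⟨e, he, hpe, hew⟩ := exists_descent_of_reflTransGen hpw hwp'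
    refine ⟨e, he, fun x hx => ⟨hpe.trans hx.1, hx.2.trans (hew.trans hwq')⟩, fun hsub => ?_⟩
    exact hwq (hA.antisymm hwq' ((hsub hq).2.trans hew))
  · obtain ⟨e, he, hwe, heq⟩ := exists_descent_of_reflTransGen hwq' (lt_of_lt_of_le hqp hpw')
    refine ⟨e, he, fun x hx => ⟨hpw.trans (hwe.trans hx.1), hx.2.trans heq⟩, fun hsub => ?_⟩
    exact hwp (hA.antisymm (hwe.trans (hsub hp).1) hpw)

theorem exists_descent_pathInterval_subset_pair [Finite V] (hA : IsAcyclicRel O)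
    (hne : (descents O).Nonempty) : ∃ e ∈ descents O, pathInterval O e.1 e.2 ⊆ {e.1, e.2} := by
  obtain ⟨e, he, hmin⟩ :=
    Set.exists_min_image _ (fun e => (pathInterval O e.1 e.2).ncard) (Set.toFinite _) hne
  refine ⟨e, he, fun w hw => ?_⟩
  by_contra hw'
  simp only [Set.mem_insert_iff, Set.mem_singleton_iff, not_or] at hw'
  obtain ⟨e', he', hss⟩ := exists_descent_pathInterval_ssubset hA he.2 hw hw'.1 hw'.2
  exact (Set.ncard_lt_ncard hss).not_ge (hmin e' he')

theorem descents_reverseOn_ssubset (hA : IsAcyclicRel O) {p q : V} (he : (p, q) ∈ descents O)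
    (hI : pathInterval O p q ⊆ {p, q}) :
    descents (reverseOn O (pathInterval O p q)) ⊂ descents O := by
  have hp : p ∈ pathInterval O p q := ⟨.refl, .single he.1⟩
  have hq : q ∈ pathInterval O p q := ⟨.single he.1, .refl⟩
  refine ⟨?_, fun hsub => ?_⟩
  · rintro ⟨a, b⟩ ⟨⟨hab, -⟩ | ⟨hba, ha, hb⟩, hlt⟩
    · exact ⟨hab, hlt⟩
    · exfalso
      dsimp only at hba ha hb hlt
      rcases hI ha with rfl | rfl <;> rcases hI hb with rfl | rfl
      · exact lt_irrefl _ hlt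
      · exact hA.asymm he.1 hba
      · exact lt_asymm hlt he.2
      · exact lt_irrefl _ hlt
  · exact (reverseOn_iff_of_rel hA he.1).mp (hsub he).1 ⟨hp, hq⟩

theorem IsOrientation.iff_lt_of_descents_eq_empty {G : SimpleGraph V} (hO : IsOrientation G O)
    (hd : descents O = ∅) (a b : V) : O a b ↔ G.Adj a b ∧ a < b := by
  have hnd : ∀ x y, O x y → ¬ y < x := fun x y hxy hyx =>
    Set.eq_empty_iff_forall_notMem.mp hd (x, y) ⟨hxy, hyx⟩
  constructor
  · intro hab
    have hadj := hO.1 a b hab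
    exact ⟨hadj, lt_of_le_of_ne (not_lt.mp (hnd a b hab)) hadj.ne⟩
  · rintro ⟨hadj, hlt⟩
    by_contra hab
    exact hnd b a (not_not.mp (mt (hO.2 a b hadj).mpr hab)) hlt

end Descents

section Connected

variable {V : Type*} [LinearOrder V] {G : SimpleGraph V}

theorem AOVert.exists_aoAdj_descents_ssubset [Finite V] (O : AOVert G)
    (hne : (descents O.1).Nonempty) : ∃ O', AOAdj G O O' ∧ descents O'.1 ⊂ descents O.1 := by
  obtain ⟨⟨p, q⟩, he, hI⟩ := exists_descent_pathInterval_subset_pair O.2.2 hne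
  refine ⟨O.reversal p q, AOVert.aoAdj_iff.mpr ⟨(p, q), he.1, rfl⟩, ?_⟩
  change descents (intervalReversal O.1 p q) ⊂ _
  rw [intervalReversal_eq_reverseOn O.2.2]
  exact descents_reverseOn_ssubset O.2.2 he hI

theorem AOVert.exists_reflTransGen_descents_eq_empty [Finite V] (O : AOVert G) :
    ∃ D : AOVert G, descents D.1 = ∅ ∧ ReflTransGen (AOAdj G) O D := by
  induction hn : (descents O.1).ncard using Nat.strong_induction_on generalizing O with
  | _ n ih =>
    rcases (descents O.1).eq_empty_or_nonempty with h | h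
    · exact ⟨O, h, .refl⟩
    obtain ⟨O', hadj, hss⟩ := O.exists_aoAdj_descents_ssubset h
    obtain ⟨D, hD, hO'D⟩ := ih _ (hn ▸ Set.ncard_lt_ncard hss) O' rfl
    exact ⟨D, hD, .head hadj hO'D⟩

theorem reflTransGen_aoAdj [Finite V] (O₁ O₂ : AOVert G) : ReflTransGen (AOAdj G) O₁ O₂ := by
  obtain ⟨D₁, hD₁, h₁⟩ := O₁.exists_reflTransGen_descents_eq_empty
  obtain ⟨D₂, hD₂, h₂⟩ := O₂.exists_reflTransGen_descents_eq_empty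
  have hD : D₁ = D₂ := Subtype.ext <| funext₂ fun a b => propext <|
    (D₁.2.1.iff_lt_of_descents_eq_empty hD₁ a b).trans
      (D₂.2.1.iff_lt_of_descents_eq_empty hD₂ a b).symm
  subst hD
  exact h₁.trans (ReflTransGen.mono (fun _ _ h => AOAdj.symm h) _ _ (reflTransGen_swap.mpr h₂))

end Connected

/-- `AO_G^inter` is a well defined simple graph (the adjacency is symmetric),
it is `|E|`-regular, and it is connected. -/
theorem stmt17 (V : Type*) [Fintype V] (G : SimpleGraph V) :
    (∀ O₁ O₂ : AOVert G, AOAdj G O₁ O₂ → AOAdj G O₂ O₁) ∧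
    (∀ O : AOVert G, {O' : AOVert G | AOAdj G O O'}.ncard = G.edgeSet.ncard) ∧
    (∀ O₁ O₂ : AOVert G, Relation.ReflTransGen (AOAdj G) O₁ O₂) := by
  let : LinearOrder V := LinearOrder.lift' _ (Fintype.equivFin V).injective
  exact ⟨fun _ _ => AOAdj.symm, ncard_setOf_aoAdj, reflTransGen_aoAdj⟩
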